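/- Let Q = 2d+2 and β = Λ(Q−1)/λ + 1 with 0 < λ ≤ Λ. Then β ≥ 4, and the radial function Φ(x) = C_1 ρ(x)^{2−β} + C_2 (C_1 ≥ 0) is a classical solution of M^-_{λ,Λ}(D^2_{H^d}Φ) = 0 on R^{2d+1} \ {0}; moreover r ↦ C_1 r^{2−β} + C_2 is convex and decreasing on (0,∞) when C_1 > 0. -/

import Mathlib

open Matrix MeasureTheory Real Set

noncomputable def pucciPlus (l L : ℝ) {n : ℕ} {M : Matrix (Fin n) (Fin n) ℝ}
    (hM : M.IsHermitian) : ℝ :=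
  ∑ i, (L * max (hM.eigenvalues i) 0 + l * min (hM.eigenvalues i) 0)

noncomputable def pucciMinus (l L : ℝ) {n : ℕ} {M : Matrix (Fin n) (Fin n) ℝ}
    (hM : M.IsHermitian) : ℝ :=
  ∑ i, (l * max (hM.eigenvalues i) 0 + L * min (hM.eigenvalues i) 0)

noncomputable def heisVF (d : ℕ) (i : Fin (2*d)) (x : Fin (2*d+1) → ℝ) : Fin (2*d+1) → ℝ :=
  if _h : (i : ℕ) < d then
    (Pi.single (Fin.castSucc i) 1 : Fin (2*d+1) → ℝ)
      + (2 * x ⟨(i:ℕ) + d, by omega⟩) • (Pi.single (Fin.last (2*d)) 1 : Fin (2*d+1) → ℝ)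
  else
    (Pi.single (Fin.castSucc i) 1 : Fin (2*d+1) → ℝ)
      - (2 * x ⟨(i:ℕ) - d, by omega⟩) • (Pi.single (Fin.last (2*d)) 1 : Fin (2*d+1) → ℝ)

noncomputable def hGrad (d : ℕ) (u : (Fin (2*d+1) → ℝ) → ℝ) (x : Fin (2*d+1) → ℝ) :
    Fin (2*d) → ℝ := fun i => fderiv ℝ u x (heisVF d i x)

noncomputable def hGradSq (d : ℕ) (u : (Fin (2*d+1) → ℝ) → ℝ) (x : Fin (2*d+1) → ℝ) : ℝ :=
  ∑ i : Fin (2*d), (hGrad d u x i) ^ 2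

noncomputable def hHess (d : ℕ) (u : (Fin (2*d+1) → ℝ) → ℝ) (x : Fin (2*d+1) → ℝ) :
    Matrix (Fin (2*d)) (Fin (2*d)) ℝ :=
  Matrix.of fun i j =>
    (fderiv ℝ (fun y => hGrad d u y j) x (heisVF d i x)
      + fderiv ℝ (fun y => hGrad d u y i) x (heisVF d j x)) / 2

lemma hHess_herm (d : ℕ) (u : (Fin (2*d+1) → ℝ) → ℝ) (x : Fin (2*d+1) → ℝ) :
    (hHess d u x).IsHermitian := by
  unfold Matrix.IsHermitian
  ext i j
  simp [hHess, Matrix.conjTranspose_apply, add_comm]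

/-- The Koranyi gauge norm on the Heisenberg group `ℍ^d ≃ ℝ^{2d+1}`. -/
noncomputable def hGauge (d : ℕ) (x : Fin (2*d+1) → ℝ) : ℝ :=
  ((∑ i : Fin (2*d), x (Fin.castSucc i) ^ 2) ^ 2 + x (Fin.last (2*d)) ^ 2) ^ (1/4 : ℝ)

/-!
Write `w = ρ⁴ = s² + t²` with `s = |x'|²` the squared horizontal norm, and let `J` be the
standard complex structure on `ℝ^{2d}`, so that `X_i = ∂_i + 2 (J x')_i ∂_t`. Then `X w = 4 v`
with `v = s x' + t J x'`, and `Jv ⊥ v`, `|Jv|² = |v|² = s w`. For a radial function `φ(w)` the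
horizontal Hessian is `K I + k₁ v vᵀ + k₂ (Jv)(Jv)ᵀ`; such a matrix is annihilated by a cubic,
and its trace and the trace of its square then force the eigenvalues `K + k₁ s w`, `K + k₂ s w`
and `K` (with multiplicity `2d - 2`). For `φ = C₁ r^γ + C₂`, `γ = (2 - β)/4`, these are
`(4γ - 1) K ≥ 0`, `3K ≤ 0` and `K ≤ 0`, so `M⁻ = K (λ (4γ - 1) + (2d + 1) Λ)`, which vanishes
exactly for `β = Λ(2d + 1)/λ + 1`.
-/

open Polynomial Filter Topology

namespace Matrix.IsHermitian
variable {n : Type*} [Fintype n] [DecidableEq n] {M : Matrix n n ℝ}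

theorem trace_pow_eq_sum_eigenvalues_pow (hM : M.IsHermitian) (k : ℕ) :
    (M ^ k).trace = ∑ i, hM.eigenvalues i ^ k := by
  conv_lhs => rw [hM.spectral_theorem, ← map_pow, Unitary.conjStarAlgAut_apply,
    trace_mul_cycle, Unitary.coe_star_mul_self, one_mul, diagonal_pow, trace_diagonal]
  simp

theorem eval_eigenvalues_of_aeval_eq_zero (hM : M.IsHermitian) {p : ℝ[X]}
    (hp : aeval M p = 0) (i : n) : p.eval (hM.eigenvalues i) = 0 := by
  have : Nontrivial (Matrix n n ℝ) :=
    ⟨⟨0, 1, fun h => by simpa using congrFun (congrFun h i) i⟩⟩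
  simpa [hp, spectrum.zero_eq] using
    spectrum.subset_polynomial_aeval M p ⟨_, hM.eigenvalues_mem_spectrum_real i, rfl⟩

end Matrix.IsHermitian

theorem exists_quadratic_eqOn_three (a b c : ℝ) (g : ℝ → ℝ) :
    ∃ A B C : ℝ, ∀ x ∈ ({a, b, c} : Finset ℝ), g x = A * x ^ 2 + B * x + C := by
  classical
  set p := Lagrange.interpolate {a, b, c} id g
  have hinj : Set.InjOn id (({a, b, c} : Finset ℝ) : Set ℝ) := Set.injOn_id _
  have hdeg : p.natDegree < 3 := by
    rcases eq_or_ne p 0 with hp | hp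
    · simp [hp]
    rw [natDegree_lt_iff_degree_lt hp]
    exact (Lagrange.degree_interpolate_lt g hinj).trans_le
      (by exact_mod_cast Finset.card_le_three)
  refine ⟨p.coeff 2, p.coeff 1, p.coeff 0, fun x hx => ?_⟩
  rw [← Lagrange.eval_interpolate_at_node g hinj hx, id, eval_eq_sum_range' hdeg]
  simp [Finset.sum_range_succ]
  ring

theorem Fintype.sum_comp_eq_of_powerSums {ι : Type*} [Fintype ι] (e : ι → ℝ) (a b c : ℝ)
    (he : ∀ i, e i ∈ ({a, b, c} : Finset ℝ))
    (h₁ : ∑ i, e i = a + b + (Fintype.card ι - 2) * c)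
    (h₂ : ∑ i, e i ^ 2 = a ^ 2 + b ^ 2 + (Fintype.card ι - 2) * c ^ 2) (g : ℝ → ℝ) :
    ∑ i, g (e i) = g a + g b + (Fintype.card ι - 2) * g c := by
  obtain ⟨A, B, C, hg⟩ := exists_quadratic_eqOn_three a b c g
  calc ∑ i, g (e i) = A * ∑ i, e i ^ 2 + B * ∑ i, e i + Fintype.card ι * C := by
        simp only [hg _ (he _), Finset.sum_add_distrib, Finset.mul_sum, Finset.sum_const,
          Finset.card_univ, nsmul_eq_mul]
    _ = g a + g b + (Fintype.card ι - 2) * g c := by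
        rw [h₁, h₂, hg a (by simp), hg b (by simp), hg c (by simp)]
        ring

section RankTwo
variable {n : Type*} [Fintype n] {q p : n → ℝ} {N : ℝ}

theorem vecMulVec_self_mul_vecMulVec_self {u v : n → ℝ} {c : ℝ} (h : u ⬝ᵥ v = c) :
    vecMulVec u u * vecMulVec v v = c • vecMulVec u v := by
  rw [vecMulVec_mul_vecMulVec, h, vecMulVec_smul]

variable [DecidableEq n]

theorem aeval_rankTwo_eq_zero (hq : q ⬝ᵥ q = N) (hp : p ⬝ᵥ p = N) (hqp : q ⬝ᵥ p = 0)
    (K k₁ k₂ : ℝ) :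
    aeval (K • 1 + k₁ • vecMulVec q q + k₂ • vecMulVec p p)
      ((X - C (K + k₁ * N)) * (X - C (K + k₂ * N)) * (X - C K)) = 0 := by
  have hQQ := vecMulVec_self_mul_vecMulVec_self hq
  have hPP := vecMulVec_self_mul_vecMulVec_self hp
  have hQP := vecMulVec_self_mul_vecMulVec_self hqp
  have hPQ := vecMulVec_self_mul_vecMulVec_self ((dotProduct_comm p q).trans hqp)
  simp only [map_mul, map_sub, aeval_X, aeval_C, Algebra.algebraMap_eq_smul_one, add_smul]
  simp only [sub_mul, add_mul, mul_sub, mul_add, smul_mul_assoc, mul_smul_comm, one_mul, mul_one,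
    hQQ, hPP, hQP, hPQ, smul_smul, zero_smul, zero_mul]
  module

theorem trace_rankTwo (hq : q ⬝ᵥ q = N) (hp : p ⬝ᵥ p = N) (K k₁ k₂ : ℝ) :
    (K • 1 + k₁ • vecMulVec q q + k₂ • vecMulVec p p).trace
      = (K + k₁ * N) + (K + k₂ * N) + (Fintype.card n - 2) * K := by
  simp only [trace_add, trace_smul, trace_one, trace_vecMulVec, hq, hp, smul_eq_mul]
  ring

theorem trace_sq_rankTwo (hq : q ⬝ᵥ q = N) (hp : p ⬝ᵥ p = N) (hqp : q ⬝ᵥ p = 0)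
    (K k₁ k₂ : ℝ) :
    ((K • 1 + k₁ • vecMulVec q q + k₂ • vecMulVec p p) ^ 2).trace
      = (K + k₁ * N) ^ 2 + (K + k₂ * N) ^ 2 + (Fintype.card n - 2) * K ^ 2 := by
  have hQQ := vecMulVec_self_mul_vecMulVec_self hq
  have hPP := vecMulVec_self_mul_vecMulVec_self hp
  have hQP := vecMulVec_self_mul_vecMulVec_self hqp
  have hPQ := vecMulVec_self_mul_vecMulVec_self ((dotProduct_comm p q).trans hqp)
  simp only [sq, add_mul, mul_add, smul_mul_assoc, mul_smul_comm, one_mul, mul_one,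
    hQQ, hPP, hQP, hPQ, smul_smul, zero_smul, trace_zero, trace_add, trace_smul,
    trace_one, trace_vecMulVec, hq, hp, smul_eq_mul]
  ring

theorem Matrix.IsHermitian.sum_comp_eigenvalues_of_eq_rankTwo {M : Matrix n n ℝ}
    (hM : M.IsHermitian) (hq : q ⬝ᵥ q = N) (hp : p ⬝ᵥ p = N) (hqp : q ⬝ᵥ p = 0)
    {K k₁ k₂ : ℝ} (hMeq : M = K • 1 + k₁ • vecMulVec q q + k₂ • vecMulVec p p)
    (g : ℝ → ℝ) :
    ∑ i, g (hM.eigenvalues i)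
      = g (K + k₁ * N) + g (K + k₂ * N) + (Fintype.card n - 2) * g K := by
  subst hMeq
  refine Fintype.sum_comp_eq_of_powerSums _ _ _ _ (fun i => ?_) ?_ ?_ g
  · have := hM.eval_eigenvalues_of_aeval_eq_zero (aeval_rankTwo_eq_zero hq hp hqp K k₁ k₂) i
    simpa [sub_eq_zero, or_assoc] using this
  · simpa using hM.trace_eq_sum_eigenvalues.symm.trans (trace_rankTwo hq hp K k₁ k₂)
  · exact (hM.trace_pow_eq_sum_eigenvalues_pow 2).symm.trans
      (trace_sq_rankTwo hq hp hqp K k₁ k₂)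

theorem pucciMinus_of_eq_rankTwo {m : ℕ} {M : Matrix (Fin m) (Fin m) ℝ} (hM : M.IsHermitian)
    {q p : Fin m → ℝ} (hq : q ⬝ᵥ q = N) (hp : p ⬝ᵥ p = N) (hqp : q ⬝ᵥ p = 0)
    {K k₁ k₂ : ℝ} (hMeq : M = K • 1 + k₁ • vecMulVec q q + k₂ • vecMulVec p p)
    (l L : ℝ)
    (hK : K ≤ 0) (h₁ : 0 ≤ K + k₁ * N) (h₂ : K + k₂ * N ≤ 0) :
    pucciMinus l L hM = l * (K + k₁ * N) + L * (K + k₂ * N) + (m - 2) * (L * K) := by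
  rw [pucciMinus, hM.sum_comp_eigenvalues_of_eq_rankTwo hq hp hqp hMeq
    (fun t => l * max t 0 + L * min t 0), Fintype.card_fin]
  simp [max_eq_left h₁, min_eq_right h₁, max_eq_right h₂, min_eq_left h₂, max_eq_right hK,
    min_eq_left hK]

end RankTwo

section Symplectic
variable {d : ℕ}

def symplIdx (d : ℕ) (i : Fin (2*d)) : Fin (2*d) :=
  if h : (i : ℕ) < d then ⟨i + d, by omega⟩ else ⟨i - d, by omega⟩

def symplSign (d : ℕ) (i : Fin (2*d)) : ℝ := if (i : ℕ) < d then 1 else -1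

/-- The complex structure `J (x, y) = (y, -x)` on `ℝ^{2d} = ℝ^d × ℝ^d`. -/
def sympl (d : ℕ) : (Fin (2*d) → ℝ) →ₗ[ℝ] Fin (2*d) → ℝ :=
  LinearMap.pi fun i => symplSign d i • LinearMap.proj (symplIdx d i)

theorem sympl_apply (u : Fin (2*d) → ℝ) (i : Fin (2*d)) :
    sympl d u i = symplSign d i * u (symplIdx d i) := rfl

theorem symplIdx_val (i : Fin (2*d)) :
    (symplIdx d i : ℕ) = if (i : ℕ) < d then i + d else i - d := by
  unfold symplIdx; split_ifs <;> rfl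

theorem symplIdx_involutive : Function.Involutive (symplIdx d) := by
  intro i
  have hi := i.isLt
  ext
  rw [symplIdx_val, symplIdx_val]
  split_ifs <;> omega

theorem symplSign_symplIdx (i : Fin (2*d)) : symplSign d (symplIdx d i) = -symplSign d i := by
  have hi := i.isLt
  unfold symplSign
  rw [symplIdx_val]
  split_ifs <;> first | (exfalso; omega) | norm_num

theorem symplSign_mul_self (i : Fin (2*d)) : symplSign d i * symplSign d i = 1 := by
  unfold symplSign; split_ifs <;> norm_num

theorem sympl_sympl (u : Fin (2*d) → ℝ) : sympl d (sympl d u) = -u := by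
  ext i
  simp only [sympl_apply, symplIdx_involutive i, symplSign_symplIdx, Pi.neg_apply]
  linear_combination -u i * symplSign_mul_self i

theorem dotProduct_sympl_self (u : Fin (2*d) → ℝ) : u ⬝ᵥ sympl d u = 0 := by
  have h : u ⬝ᵥ sympl d u = -(u ⬝ᵥ sympl d u) := by
    conv_lhs =>
      rw [dotProduct, ← Equiv.sum_comp (Function.Involutive.toPerm _ symplIdx_involutive)]
    simp only [dotProduct, ← Finset.sum_neg_distrib, Function.Involutive.coe_toPerm, sympl_apply,
      symplIdx_involutive _, symplSign_symplIdx]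
    exact Finset.sum_congr rfl fun i _ => by ring
  linarith

theorem sympl_dotProduct_sympl (u : Fin (2*d) → ℝ) :
    sympl d u ⬝ᵥ sympl d u = u ⬝ᵥ u := by
  conv_rhs => rw [dotProduct, ← Equiv.sum_comp (Function.Involutive.toPerm _ symplIdx_involutive)]
  refine Finset.sum_congr rfl fun i _ => ?_
  simp only [sympl_apply, Function.Involutive.coe_toPerm]
  linear_combination u (symplIdx d i) ^ 2 * symplSign_mul_self i

theorem sympl_single_apply (i j : Fin (2*d)) :
    sympl d (Pi.single i 1) j = -sympl d (Pi.single j 1) i := by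
  simp only [sympl_apply, Pi.single_apply]
  by_cases h : symplIdx d j = i
  · subst h
    simp [symplIdx_involutive j, symplSign_symplIdx]
  · have h' : symplIdx d i ≠ j := fun h' => h (h' ▸ symplIdx_involutive i)
    simp [h, h']

end Symplectic

section HorizontalGradient
variable {d : ℕ} {x : Fin (2*d+1) → ℝ}

theorem heisVF_eq (i : Fin (2*d)) (x : Fin (2*d+1) → ℝ) :
    heisVF d i x = Pi.single i.castSucc 1
      + (2 * sympl d (Fin.init x) i) • Pi.single (Fin.last (2*d)) 1 := by
  unfold heisVF
  simp only [sympl_apply, symplSign, Fin.init]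
  split_ifs with h
  · rw [one_mul]
    congr 4
    ext
    simp [symplIdx_val, h]
  · rw [sub_eq_add_neg, ← neg_smul, neg_one_mul, mul_neg]
    congr 5
    ext
    simp [symplIdx_val, h]

theorem init_heisVF (i : Fin (2*d)) (x : Fin (2*d+1) → ℝ) :
    Fin.init (heisVF d i x) = Pi.single i 1 := by
  ext k
  simp [heisVF_eq, Fin.init, Pi.single_apply, Fin.castSucc_ne_last]

theorem heisVF_last (i : Fin (2*d)) (x : Fin (2*d+1) → ℝ) :
    heisVF d i x (Fin.last (2*d)) = 2 * sympl d (Fin.init x) i := by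
  simp [heisVF_eq, Fin.castSucc_ne_last i]

def HasHGradAt (d : ℕ) (f : (Fin (2*d+1) → ℝ) → ℝ) (g : Fin (2*d) → ℝ)
    (x : Fin (2*d+1) → ℝ) : Prop :=
  ∃ f' : (Fin (2*d+1) → ℝ) →L[ℝ] ℝ,
    HasFDerivAt f f' x ∧ ∀ i, f' (heisVF d i x) = g i

namespace HasHGradAt
variable {f f₁ f₂ : (Fin (2*d+1) → ℝ) → ℝ} {g g₁ g₂ : Fin (2*d) → ℝ}

theorem hGrad_eq (h : HasHGradAt d f g x) : hGrad d f x = g := by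
  obtain ⟨f', hf, hg⟩ := h
  ext i
  simp only [hGrad, hf.fderiv, hg]

theorem congr_of_eventuallyEq (h : HasHGradAt d f g x) (h₁ : f₁ =ᶠ[𝓝 x] f) :
    HasHGradAt d f₁ g x := by
  obtain ⟨f', hf, hg⟩ := h
  exact ⟨f', hf.congr_of_eventuallyEq h₁, hg⟩

theorem add (h₁ : HasHGradAt d f₁ g₁ x) (h₂ : HasHGradAt d f₂ g₂ x) :
    HasHGradAt d (fun y => f₁ y + f₂ y) (g₁ + g₂) x := by
  obtain ⟨f₁', hf₁, hg₁⟩ := h₁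
  obtain ⟨f₂', hf₂, hg₂⟩ := h₂
  exact ⟨f₁' + f₂', hf₁.add hf₂, fun i => by simp [hg₁, hg₂]⟩

theorem mul (h₁ : HasHGradAt d f₁ g₁ x) (h₂ : HasHGradAt d f₂ g₂ x) :
    HasHGradAt d (fun y => f₁ y * f₂ y) (f₁ x • g₂ + f₂ x • g₁) x := by
  obtain ⟨f₁', hf₁, hg₁⟩ := h₁
  obtain ⟨f₂', hf₂, hg₂⟩ := h₂
  exact ⟨_, hf₁.mul hf₂, fun i => by simp [hg₁, hg₂]⟩

theorem sum {ι : Type*} [Fintype ι] {f : ι → (Fin (2*d+1) → ℝ) → ℝ}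
    {g : ι → Fin (2*d) → ℝ} (h : ∀ k, HasHGradAt d (f k) (g k) x) :
    HasHGradAt d (fun y => ∑ k, f k y) (∑ k, g k) x := by
  choose f' hf hg using h
  exact ⟨∑ k, f' k, HasFDerivAt.fun_sum fun k _ => hf k, fun i => by simp [hg]⟩

theorem comp {φ : ℝ → ℝ} {φ' : ℝ} (hφ : HasDerivAt φ φ' (f x))
    (h : HasHGradAt d f g x) :
    HasHGradAt d (fun y => φ (f y)) (φ' • g) x := by
  obtain ⟨f', hf, hg⟩ := h
  exact ⟨φ' • f', hφ.comp_hasFDerivAt x hf, fun i => by simp [hg]⟩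

end HasHGradAt

theorem hasHGradAt_comp_init (ℓ : (Fin (2*d) → ℝ) →ₗ[ℝ] ℝ) :
    HasHGradAt d (fun y => ℓ (Fin.init y)) (fun i => ℓ (Pi.single i 1)) x :=
  let ℓ' := (ℓ ∘ₗ LinearMap.funLeft ℝ ℝ Fin.castSucc).toContinuousLinearMap
  ⟨ℓ', ℓ'.hasFDerivAt, fun i => by simp [ℓ', LinearMap.funLeft, ← init_heisVF i x]; rfl⟩

theorem hasHGradAt_apply_last :
    HasHGradAt d (fun y => y (Fin.last (2*d))) ((2 : ℝ) • sympl d (Fin.init x)) x :=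
  ⟨_, (ContinuousLinearMap.proj (R := ℝ) (φ := fun _ => ℝ) (Fin.last (2*d))).hasFDerivAt,
    fun i => by simp [heisVF_last]⟩

theorem hHess_eq_of_eventuallyEq_hGrad {u : (Fin (2*d+1) → ℝ) → ℝ}
    {G : (Fin (2*d+1) → ℝ) → Fin (2*d) → ℝ} {H : Fin (2*d) → Fin (2*d) → ℝ}
    (hG : hGrad d u =ᶠ[𝓝 x] G) (hH : ∀ j, HasHGradAt d (fun y => G y j) (H j) x) :
    hHess d u x = of fun i j => (H j i + H i j) / 2 := by
  have h : ∀ j, hGrad d (fun y => hGrad d u y j) x = H j := fun j =>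
    ((hH j).congr_of_eventuallyEq (hG.mono fun y hy => congrFun hy j)).hGrad_eq
  ext i j
  exact congrArg₂ (fun a b => (a + b) / 2) (congrFun (h j) i) (congrFun (h i) j)

end HorizontalGradient

section Gauge
variable {d : ℕ} {x : Fin (2*d+1) → ℝ}

def horizSq (d : ℕ) (x : Fin (2*d+1) → ℝ) : ℝ := ∑ i : Fin (2*d), x i.castSucc ^ 2

def gaugePow4 (d : ℕ) (x : Fin (2*d+1) → ℝ) : ℝ := horizSq d x ^ 2 + x (Fin.last (2*d)) ^ 2

def gaugeVec (d : ℕ) (x : Fin (2*d+1) → ℝ) : Fin (2*d) → ℝ :=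
  horizSq d x • Fin.init x + x (Fin.last (2*d)) • sympl d (Fin.init x)

theorem continuous_gaugePow4 : Continuous (gaugePow4 d) := by
  unfold gaugePow4 horizSq; fun_prop

theorem hGauge_rpow (x : Fin (2*d+1) → ℝ) (p : ℝ) :
    hGauge d x ^ p = gaugePow4 d x ^ (p / 4) := by
  rw [show hGauge d x = gaugePow4 d x ^ (1/4 : ℝ) from rfl,
    ← Real.rpow_mul (by unfold gaugePow4; positivity)]
  ring_nf

theorem horizSq_eq_dotProduct (x : Fin (2*d+1) → ℝ) :
    horizSq d x = Fin.init x ⬝ᵥ Fin.init x := by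
  simp [horizSq, dotProduct, sq, Fin.init]

theorem horizSq_nonneg (x : Fin (2*d+1) → ℝ) : 0 ≤ horizSq d x :=
  Finset.sum_nonneg fun _ _ => sq_nonneg _

theorem gaugePow4_pos (hx : x ≠ 0) : 0 < gaugePow4 d x := by
  have hs := horizSq_nonneg x
  refine (add_nonneg (sq_nonneg _) (sq_nonneg _)).lt_of_ne fun h => hx ?_
  have hs0 : horizSq d x = 0 := by nlinarith [sq_nonneg (x (Fin.last (2*d)))]
  have ht : x (Fin.last (2*d)) = 0 := by nlinarith [sq_nonneg (x (Fin.last (2*d)))]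
  have hinit : ∀ i : Fin (2*d), x i.castSucc = 0 := fun i =>
    pow_eq_zero_iff two_ne_zero |>.mp <|
      (Finset.sum_eq_zero_iff_of_nonneg fun _ _ => sq_nonneg _).mp hs0 i (Finset.mem_univ i)
  ext k
  exact Fin.lastCases ht hinit k

theorem dotProduct_gaugeVec_self (x : Fin (2*d+1) → ℝ) :
    gaugeVec d x ⬝ᵥ gaugeVec d x = horizSq d x * gaugePow4 d x := by
  simp only [gaugeVec, add_dotProduct, dotProduct_add, smul_dotProduct, dotProduct_smul,
    dotProduct_sympl_self, sympl_dotProduct_sympl, ← horizSq_eq_dotProduct, smul_eq_mul,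
    dotProduct_comm (sympl d _) (Fin.init x), gaugePow4]
  ring

theorem sympl_gaugeVec (x : Fin (2*d+1) → ℝ) :
    sympl d (gaugeVec d x)
      = horizSq d x • sympl d (Fin.init x) - x (Fin.last (2*d)) • Fin.init x := by
  simp [gaugeVec, sympl_sympl, sub_eq_add_neg]

theorem dotProduct_sympl_gaugeVec_self (x : Fin (2*d+1) → ℝ) :
    sympl d (gaugeVec d x) ⬝ᵥ sympl d (gaugeVec d x) = horizSq d x * gaugePow4 d x := by
  rw [sympl_dotProduct_sympl, dotProduct_gaugeVec_self]

theorem vecMulVec_gaugeVec_add (x : Fin (2*d+1) → ℝ) :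
    vecMulVec (gaugeVec d x) (gaugeVec d x)
      + vecMulVec (sympl d (gaugeVec d x)) (sympl d (gaugeVec d x))
      = gaugePow4 d x • (vecMulVec (Fin.init x) (Fin.init x)
        + vecMulVec (sympl d (Fin.init x)) (sympl d (Fin.init x))) := by
  rw [sympl_gaugeVec]
  ext i j
  simp only [gaugeVec, gaugePow4, Matrix.add_apply, Matrix.smul_apply, vecMulVec_apply,
    Pi.add_apply, Pi.sub_apply, Pi.smul_apply, smul_eq_mul]
  ring

theorem hasHGradAt_apply_castSucc (k : Fin (2*d)) :
    HasHGradAt d (fun y => y k.castSucc) (fun i => (Pi.single i 1 : Fin (2*d) → ℝ) k) x :=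
  hasHGradAt_comp_init (LinearMap.proj k)

theorem hasHGradAt_sympl_init (j : Fin (2*d)) :
    HasHGradAt d (fun y => sympl d (Fin.init y) j) (fun i => sympl d (Pi.single i 1) j) x :=
  hasHGradAt_comp_init (LinearMap.proj j ∘ₗ sympl d)

theorem hasHGradAt_horizSq : HasHGradAt d (horizSq d) ((2 : ℝ) • Fin.init x) x := by
  have h := HasHGradAt.sum fun k : Fin (2*d) =>
    (hasHGradAt_apply_castSucc (x := x) k).mul (hasHGradAt_apply_castSucc k)
  convert h using 1
  · ext y; simp [horizSq, sq]
  · ext i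
    simp only [Finset.sum_apply, Pi.add_apply, Pi.smul_apply, Pi.single_apply, smul_eq_mul,
      mul_ite, mul_one, mul_zero, Finset.sum_ite_eq', Finset.sum_add_distrib, Finset.mem_univ,
      if_true, Fin.init]
    ring

theorem hasHGradAt_gaugePow4 : HasHGradAt d (gaugePow4 d) ((4 : ℝ) • gaugeVec d x) x := by
  have h := (hasHGradAt_horizSq (x := x)).mul hasHGradAt_horizSq |>.add
    ((hasHGradAt_apply_last (x := x)).mul hasHGradAt_apply_last)
  convert h using 1
  · ext y; simp [gaugePow4, sq]
  · ext i; simp [gaugeVec]; ring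

theorem hasHGradAt_gaugeVec (j : Fin (2*d)) :
    HasHGradAt d (fun y => gaugeVec d y j)
      (fun i => 2 * (x i.castSucc * x j.castSucc
          + sympl d (Fin.init x) i * sympl d (Fin.init x) j)
        + horizSq d x * (Pi.single i 1 : Fin (2*d) → ℝ) j
        + x (Fin.last (2*d)) * sympl d (Pi.single i 1) j) x := by
  have h := (hasHGradAt_horizSq (x := x)).mul (hasHGradAt_apply_castSucc j) |>.add
    ((hasHGradAt_apply_last (x := x)).mul (hasHGradAt_sympl_init j))
  convert h using 1
  · ext y; simp [gaugeVec, Fin.init]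
  · ext i; simp [Fin.init]; ring

end Gauge

section Radial
variable {d : ℕ} {x : Fin (2*d+1) → ℝ} {φ φ' : ℝ → ℝ} {φ'' : ℝ}

theorem hGrad_comp_gaugePow4 {c : ℝ} (hφ : HasDerivAt φ c (gaugePow4 d x)) :
    hGrad d (fun y => φ (gaugePow4 d y)) x = (4 * c) • gaugeVec d x := by
  rw [(hasHGradAt_gaugePow4.comp hφ).hGrad_eq, smul_smul, mul_comm c]

theorem hHess_comp_gaugePow4 (hφ : ∀ᶠ r in 𝓝 (gaugePow4 d x), HasDerivAt φ (φ' r) r)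
    (hφ' : HasDerivAt φ' φ'' (gaugePow4 d x)) :
    hHess d (fun y => φ (gaugePow4 d y)) x
      = (4 * horizSq d x * φ' (gaugePow4 d x)) • 1
        + (16 * φ'') • vecMulVec (gaugeVec d x) (gaugeVec d x)
        + (8 * φ' (gaugePow4 d x)) • (vecMulVec (Fin.init x) (Fin.init x)
          + vecMulVec (sympl d (Fin.init x)) (sympl d (Fin.init x))) := by
  have hG : hGrad d (fun y => φ (gaugePow4 d y))
      =ᶠ[𝓝 x] fun y => (4 * φ' (gaugePow4 d y)) • gaugeVec d y :=
    (continuous_gaugePow4.tendsto x).eventually hφ |>.mono fun y hy => hGrad_comp_gaugePow4 hy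
  rw [hHess_eq_of_eventuallyEq_hGrad hG fun j =>
    (hasHGradAt_gaugePow4.comp (hφ'.const_mul 4)).mul (hasHGradAt_gaugeVec j)]
  ext i j
  -- the derivative of `X_j` along `X_i` contributes `t J_{ji}`, which symmetrization kills
  have hJ := sympl_single_apply (d := d) i j
  simp only [of_apply, Matrix.add_apply, Matrix.smul_apply, Matrix.one_apply, vecMulVec_apply,
    Pi.add_apply, Pi.smul_apply, smul_eq_mul, Pi.single_apply, Fin.init]
  rcases eq_or_ne i j with rfl | hij
  · simp only [if_true]
    linear_combination (2 * φ' (gaugePow4 d x) * x (Fin.last (2*d))) * hJ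
  · simp only [hij, hij.symm, if_false]
    linear_combination (2 * φ' (gaugePow4 d x) * x (Fin.last (2*d))) * hJ

theorem hHess_comp_gaugePow4_eq_rankTwo (hx : x ≠ 0)
    (hφ : ∀ᶠ r in 𝓝 (gaugePow4 d x), HasDerivAt φ (φ' r) r)
    (hφ' : HasDerivAt φ' φ'' (gaugePow4 d x)) :
    hHess d (fun y => φ (gaugePow4 d y)) x
      = (4 * horizSq d x * φ' (gaugePow4 d x)) • 1
        + (16 * φ'' + 8 * φ' (gaugePow4 d x) / gaugePow4 d x)
          • vecMulVec (gaugeVec d x) (gaugeVec d x)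
        + (8 * φ' (gaugePow4 d x) / gaugePow4 d x)
          • vecMulVec (sympl d (gaugeVec d x)) (sympl d (gaugeVec d x)) := by
  have hw := (gaugePow4_pos hx).ne'
  have hJ : (8 * φ' (gaugePow4 d x)) • (vecMulVec (Fin.init x) (Fin.init x)
        + vecMulVec (sympl d (Fin.init x)) (sympl d (Fin.init x)))
      = (8 * φ' (gaugePow4 d x) / gaugePow4 d x) • (vecMulVec (gaugeVec d x) (gaugeVec d x)
        + vecMulVec (sympl d (gaugeVec d x)) (sympl d (gaugeVec d x))) := by
    rw [vecMulVec_gaugeVec_add, smul_smul, div_mul_cancel₀ _ hw]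
  rw [hHess_comp_gaugePow4 hφ hφ', hJ]
  module

theorem pucciMinus_hHess_comp_gaugePow4 (hx : x ≠ 0)
    (hφ : ∀ᶠ r in 𝓝 (gaugePow4 d x), HasDerivAt φ (φ' r) r)
    (hφ' : HasDerivAt φ' φ'' (gaugePow4 d x)) (hφ'_nonpos : φ' (gaugePow4 d x) ≤ 0)
    (hφ'' : 0 ≤ 3 * φ' (gaugePow4 d x) + 4 * gaugePow4 d x * φ'') (l L : ℝ) :
    pucciMinus l L (hHess_herm d (fun y => φ (gaugePow4 d y)) x)
      = 4 * horizSq d x * (l * (3 * φ' (gaugePow4 d x) + 4 * gaugePow4 d x * φ'')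
        + (2 * d + 1) * L * φ' (gaugePow4 d x)) := by
  have hw := (gaugePow4_pos hx).ne'
  have hs := horizSq_nonneg x
  have h₁ : 4 * horizSq d x * φ' (gaugePow4 d x) + (16 * φ'' + 8 * φ' (gaugePow4 d x)
      / gaugePow4 d x) * (horizSq d x * gaugePow4 d x)
      = 4 * horizSq d x * (3 * φ' (gaugePow4 d x) + 4 * gaugePow4 d x * φ'') := by
    field_simp
    ring
  have h₂ : 4 * horizSq d x * φ' (gaugePow4 d x) + 8 * φ' (gaugePow4 d x) / gaugePow4 d x
      * (horizSq d x * gaugePow4 d x) = 12 * horizSq d x * φ' (gaugePow4 d x) := by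
    field_simp
    ring
  rw [pucciMinus_of_eq_rankTwo _ (dotProduct_gaugeVec_self x) (dotProduct_sympl_gaugeVec_self x)
    (dotProduct_sympl_self _) (hHess_comp_gaugePow4_eq_rankTwo hx hφ hφ') l L
    (mul_nonpos_of_nonneg_of_nonpos (by positivity) hφ'_nonpos)
    (h₁ ▸ mul_nonneg (by positivity) hφ'')
    (h₂ ▸ mul_nonpos_of_nonneg_of_nonpos (by positivity) hφ'_nonpos), h₁, h₂]
  push_cast
  ring

theorem pucciMinus_hHess_rpow_gaugePow4 (hx : x ≠ 0) {C₁ γ : ℝ} (hC₁ : 0 ≤ C₁)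
    (hγ : γ ≤ 0) (C₂ l L : ℝ) :
    pucciMinus l L (hHess_herm d (fun y => C₁ * gaugePow4 d y ^ γ + C₂) x)
      = 4 * horizSq d x * C₁ * γ * gaugePow4 d x ^ (γ - 1)
        * (l * (4 * γ - 1) + (2 * d + 1) * L) := by
  have hw := gaugePow4_pos hx
  have hpow : gaugePow4 d x * gaugePow4 d x ^ (γ - 1 - 1) = gaugePow4 d x ^ (γ - 1) := by
    rw [Real.rpow_sub_one hw.ne' (γ - 1), mul_div_cancel₀ _ hw.ne']
  have hC₁γ : C₁ * γ * gaugePow4 d x ^ (γ - 1) ≤ 0 :=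
    mul_nonpos_of_nonpos_of_nonneg (mul_nonpos_of_nonneg_of_nonpos hC₁ hγ) (by positivity)
  have hφ'' : 3 * (C₁ * (γ * gaugePow4 d x ^ (γ - 1)))
      + 4 * gaugePow4 d x * (C₁ * (γ * ((γ - 1) * gaugePow4 d x ^ (γ - 1 - 1))))
      = (4 * γ - 1) * (C₁ * γ * gaugePow4 d x ^ (γ - 1)) := by
    linear_combination (4 * C₁ * γ * (γ - 1)) * hpow
  rw [pucciMinus_hHess_comp_gaugePow4 (φ := fun r => C₁ * r ^ γ + C₂) hx
    ((lt_mem_nhds hw).mono fun r hr =>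
      ((Real.hasDerivAt_rpow_const (Or.inl hr.ne')).const_mul C₁).add_const C₂)
    (((Real.hasDerivAt_rpow_const (Or.inl hw.ne')).const_mul γ).const_mul C₁)
    (by linarith) (by rw [hφ'']; nlinarith), hφ'']
  ring

end Radial

theorem convexOn_rpow_of_nonpos {p : ℝ} (hp : p ≤ 0) :
    ConvexOn ℝ (Ioi 0) fun x : ℝ => x ^ p := by
  have hd : ∀ q : ℝ, DifferentiableOn ℝ (fun x : ℝ => x ^ q) (Ioi 0) := fun q x hx =>
    (Real.hasDerivAt_rpow_const (Or.inl (ne_of_gt hx))).differentiableAt.differentiableWithinAt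
  refine convexOn_of_deriv2_nonneg' (convex_Ioi 0) (hd p) ?_ fun x hx => ?_
  · rw [Real.deriv_rpow_const']
    exact (hd (p - 1)).const_mul p
  · rw [Real.iter_deriv_rpow_const]
    simpa [descPochhammer_succ_right] using mul_nonneg
      (mul_nonneg_of_nonpos_of_nonpos hp (by linarith)) (Real.rpow_nonneg (le_of_lt hx) (p - 2))

/-- for `β = Λ(Q−1)/λ + 1`, one has `β ≥ 4`, `Φ(x) = C₁ρ(x)^{2−β} + C₂`
solves `M⁻_{λ,Λ}(D²_{ℍ^d}Φ) = 0` away from the origin, and `r ↦ C₁r^{2−β}+C₂` is convex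
and decreasing on `(0,∞)` when `C₁ > 0`. -/
theorem fundamental_solution_beta (d : ℕ) (hd : 1 ≤ d) (l L C1 C2 : ℝ)
    (hl : 0 < l) (hL : l ≤ L) (hC1 : 0 ≤ C1)
    (β : ℝ) (hβ : β = L * (2*d+1) / l + 1) :
    4 ≤ β ∧
    (∀ x : Fin (2*d+1) → ℝ, x ≠ 0 →
      pucciMinus l L (hHess_herm d (fun y => C1 * hGauge d y ^ (2 - β) + C2) x) = 0) ∧
    (0 < C1 →
      ConvexOn ℝ (Set.Ioi 0) (fun r : ℝ => C1 * r ^ (2 - β) + C2) ∧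
      StrictAntiOn (fun r : ℝ => C1 * r ^ (2 - β) + C2) (Set.Ioi 0)) := by
  have hlβ : l * (β - 1) = L * (2 * d + 1) := by
    rw [hβ]
    field_simp
    ring
  have hβ4 : 4 ≤ β := by
    have hd' : (1 : ℝ) ≤ d := by exact_mod_cast hd
    have h3 : l * 3 ≤ l * (β - 1) := by rw [hlβ]; nlinarith
    linarith [le_of_mul_le_mul_left h3 hl]
  refine ⟨hβ4, fun x hx => ?_, fun hC1' => ⟨?_, fun a ha b hb hab => ?_⟩⟩
  · simp only [hGauge_rpow]
    rw [pucciMinus_hHess_rpow_gaugePow4 hx hC1 (by linarith) C2 l L]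
    linear_combination (-(4 * horizSq d x * C1 * ((2 - β) / 4)
      * gaugePow4 d x ^ ((2 - β) / 4 - 1))) * hlβ
  · exact ((convexOn_rpow_of_nonpos (by linarith)).smul hC1).add_const C2
  · have := Real.strictAntiOn_rpow_Ioi_of_exponent_neg (by linarith : 2 - β < 0) ha hb hab
    simp only
    gcongr
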